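/- arXiv:1801.00020 — 4 statements merged into one kernel-verified Lean document; each statement's English description precedes it below -/
import Mathlib

section
/- Let G be a countable group, X a topological space with an action of G by homeomorphisms, N ∈ ℕ, and F a family of subgroups of G closed under supergroups of finite index. Assume there exists a flow space FS for G satisfying: (A) for every finite subset S ⊆ G there is α > 0 such that for every δ > 0 there is a continuous map φ : X → FS with d_fol(φ(g·x), g·φ(x)) < (α,δ) for all x ∈ X and g ∈ S; and (B) for every α > 0 and ε > 0 there exist δ > 0 and a continuous G-equivariant map ψ : FS → Δ_F^(N)(G) such that for all c, c' ∈ FS, d_fol(c,c') < (α,δ) implies d(ψ(c), ψ(c')) < ε. Then the action of G on X is N-F-amenable; equivalently, for every finite subset S ⊆ G and every ε > 0 there is a continuous map f : X → Δ_F^(N)(G) with d(f(g·x), g·f(x)) < ε for all x ∈ X and g ∈ S. -/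
open scoped Pointwise ENNReal
open Filter Topology

noncomputable section

namespace FJ

/-- The set of left cosets of members of a family `F` of subgroups of `G`. -/
def cosets {G : Type} [Group G] (F : Set (Subgroup G)) : Set (Set G) :=
  {A | ∃ (g : G) (H : Subgroup G), H ∈ F ∧ A = g • (H : Set G)}

/-- Left translation by `g` as a bijection of the set of cosets. -/
def cosetEquiv {G : Type} [Group G] (F : Set (Subgroup G)) (g : G) :
    ↥(cosets F) ≃ ↥(cosets F) where
  toFun A := ⟨g • (A : Set G), by
    obtain ⟨h, H, hH, hA⟩ := A.2
    exact ⟨g * h, H, hH, by rw [hA, smul_smul]⟩⟩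
  invFun A := ⟨g⁻¹ • (A : Set G), by
    obtain ⟨h, H, hH, hA⟩ := A.2
    exact ⟨g⁻¹ * h, H, hH, by rw [hA, smul_smul]⟩⟩
  left_inv A := Subtype.ext (inv_smul_smul g (A : Set G))
  right_inv A := Subtype.ext (smul_inv_smul g (A : Set G))

/-- Reindexing an `ℓ¹`-function along a bijection of the index set. -/
def lpT {ι : Type} (e : ι ≃ ι) (p : lp (fun _ : ι => ℝ) 1) : lp (fun _ : ι => ℝ) 1 :=
  ⟨fun i => p (e i), by
    have h1 : Summable fun i : ι => ‖p i‖ ^ ((1 : ℝ≥0∞).toReal) :=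
      (lp.memℓp p).summable (by norm_num)
    exact memℓp_gen (e.summable_iff.2 h1)⟩

@[simp] theorem lpT_apply {ι : Type} (e : ι ≃ ι) (p : lp (fun _ : ι => ℝ) 1) (i : ι) :
    lpT e p i = p (e i) := rfl

/-- The `N`-skeleton of the full simplex on the index set `ι`, inside `ℓ¹(ι)`:
finitely supported probability measures whose support has at most `N + 1` points. -/
def stdSimplex (ι : Type) (N : ℕ) : Set (lp (fun _ : ι => ℝ) 1) :=
  {p | (∀ i, 0 ≤ p i) ∧ {i | p i ≠ 0}.Finite ∧ {i | p i ≠ 0}.ncard ≤ N + 1 ∧ ∑' i, p i = 1}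

/-- Reindexing preserves the simplex. -/
def simT {ι : Type} {N : ℕ} (e : ι ≃ ι) (q : ↥(stdSimplex ι N)) : ↥(stdSimplex ι N) := by
  refine ⟨lpT e q.1, ?_, ?_, ?_, ?_⟩
  · exact fun i => q.2.1 (e i)
  · have : {i | (lpT e q.1) i ≠ 0} = e ⁻¹' {i | (q.1 : ∀ _ : ι, ℝ) i ≠ 0} := rfl
    rw [this]
    exact q.2.2.1.preimage e.injective.injOn
  · have h1 : {i | (lpT e q.1) i ≠ 0} = e.symm '' {i | (q.1 : ∀ _ : ι, ℝ) i ≠ 0} := by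
      rw [Equiv.image_eq_preimage_symm]; rfl
    rw [h1, Set.ncard_image_of_injective _ e.symm.injective]
    exact q.2.2.2.1
  · have := q.2.2.2.2
    calc ∑' i, (lpT e q.1) i = ∑' i, q.1 (e i) := rfl
    _ = ∑' i, q.1 i := e.tsum_eq _
    _ = 1 := this

/-- The isometric action of `G` on the simplex `Δ_F^{(N)}(G)`: `(g • p) A = p (g⁻¹ • A)`. -/
def simSMulF {G : Type} [Group G] (F : Set (Subgroup G)) (N : ℕ) (g : G) :
    ↥(stdSimplex ↥(cosets F) N) → ↥(stdSimplex ↥(cosets F) N) :=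
  simT (cosetEquiv F g⁻¹)

/-- The isometric action of `G` on the simplex `Δ^{(N)}(G)` by left translation:
`(g • p) h = p (g⁻¹ * h)`. -/
def simSMulG {G : Type} [Group G] (N : ℕ) (g : G) :
    ↥(stdSimplex G N) → ↥(stdSimplex G N) :=
  simT (Equiv.mulLeft g⁻¹)

end FJ

/-- A flow space for a group `G`: a metric space with an isometric `G`-action
and a (continuous) flow that commutes with the `G`-action. -/
structure FlowSpace (G : Type) [Group G] where
  carrier : Type
  [metric : MetricSpace carrier]
  smul : G → carrier → carrier
  smul_isometry : ∀ g : G, Isometry (smul g)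
  one_smul : ∀ c, smul 1 c = c
  mul_smul : ∀ g h c, smul (g * h) c = smul g (smul h c)
  flow : ℝ → carrier → carrier
  flow_continuous : Continuous (fun p : ℝ × carrier => flow p.1 p.2)
  flow_zero : ∀ c, flow 0 c = c
  flow_add : ∀ s t c, flow (s + t) c = flow s (flow t c)
  smul_flow : ∀ (g : G) (t : ℝ) (c : carrier), smul g (flow t c) = flow t (smul g c)

attribute [instance] FlowSpace.metric

/-!
Compose the map `φ : X → FS` of (A) with the equivariant map `ψ : FS → Δ_F^(N)(G)` of (B):
by equivariance `g • ψ (φ x) = ψ (g • φ x)`, and `g • φ x` is foliated-close to `φ (g • x)`,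
so `ψ ∘ φ` is `ε`-almost equivariant on the finite set `S`. Enumerating the countable group
and letting `S` exhaust `G` while `ε → 0` gives the sequence.
-/

open Finset

namespace FlowSpace

variable {G : Type} [Group G]

/-- `FS.FoliatedClose α δ c c'` is the paper's `d_fol(c, c') < (α, δ)`. -/
def FoliatedClose (FS : FlowSpace G) (α δ : ℝ) (c c' : FS.carrier) : Prop :=
  ∃ t ∈ Set.Icc (-α) α, dist (FS.flow t c) c' < δ

theorem dist_comp_smul_lt {X Y : Type} [SMul G X] [PseudoMetricSpace Y] (FS : FlowSpace G)
    (act : G → Y → Y) {S : Set G} {α δ ε : ℝ} {φ : X → FS.carrier} {ψ : FS.carrier → Y}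
    (hφ : ∀ x, ∀ g ∈ S, FS.FoliatedClose α δ (φ (g • x)) (FS.smul g (φ x)))
    (hψ_equiv : ∀ g c, ψ (FS.smul g c) = act g (ψ c))
    (hψ : ∀ c c', FS.FoliatedClose α δ c c' → dist (ψ c) (ψ c') < ε)
    (x : X) {g : G} (hg : g ∈ S) :
    dist (ψ (φ (g • x))) (act g (ψ (φ x))) < ε := by
  rw [← hψ_equiv]
  exact hψ _ _ (hφ x g hg)

end FlowSpace

theorem exists_seq_almost_equivariant_of_forall_finset {G X Y : Type} [Countable G] [Nonempty G]
    [TopologicalSpace X] [SMul G X] [PseudoMetricSpace Y] (act : G → Y → Y)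
    (h : ∀ S : Finset G, ∀ ε > (0 : ℝ), ∃ f : X → Y, Continuous f ∧
      ∀ x, ∀ g ∈ S, dist (f (g • x)) (act g (f x)) < ε) :
    ∃ f : ℕ → X → Y, (∀ n, Continuous (f n)) ∧
      ∀ g : G, ∀ ε > (0 : ℝ), ∃ n₀ : ℕ, ∀ n ≥ n₀, ∀ x : X,
        dist (f n (g • x)) (act g (f n x)) < ε := by
  classical
  obtain ⟨e, he⟩ := exists_surjective_nat G
  choose f hf_cont hf using fun n : ℕ =>
    h ((range n).image e) (1 / (n + 1)) Nat.one_div_pos_of_nat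
  refine ⟨f, hf_cont, fun g ε hε => ?_⟩
  obtain ⟨m, rfl⟩ := he g
  obtain ⟨n₀, hn₀⟩ := eventually_atTop.1 <| (eventually_gt_atTop m).and <|
    tendsto_one_div_add_atTop_nhds_zero_nat.eventually (gt_mem_nhds hε)
  exact ⟨n₀, fun n hn x =>
    (hf n x _ (mem_image_of_mem e (mem_range.2 (hn₀ n hn).1))).trans (hn₀ n hn).2⟩

theorem flowspace_criterion_N_F_amenable_general
    {G : Type} [Group G] [Countable G]
    -- `F` is a family of subgroups of `G` ...
    (F : Set (Subgroup G))
    (N : ℕ)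
    -- `X` is a topological space with an action of `G` by homeomorphisms
    {X : Type} [TopologicalSpace X] [MulAction G X]
    -- there exists a flow space `FS` for `G` such that:
    (FS : FlowSpace G)
    -- (A): for every finite `S ⊆ G` there is `α > 0` such that for every `δ > 0` there
    -- is a continuous `φ : X → FS` with `d_fol(φ(g•x), g•φ(x)) < (α, δ)` for `x ∈ X`, `g ∈ S`
    (hA : ∀ S : Finset G, ∃ α > (0 : ℝ), ∀ δ > (0 : ℝ),
      ∃ φ : X → FS.carrier, Continuous φ ∧
        ∀ (x : X), ∀ g ∈ S, ∃ t ∈ Set.Icc (-α) α,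
          dist (FS.flow t (φ (g • x))) (FS.smul g (φ x)) < δ)
    -- (B): for every `α, ε > 0` there are `δ > 0` and a continuous `G`-equivariant
    -- `ψ : FS → Δ_F^{(N)}(G)` such that `d_fol(c, c') < (α, δ)` implies `d(ψ c, ψ c') < ε`
    (hB : ∀ α > (0 : ℝ), ∀ ε > (0 : ℝ), ∃ δ > (0 : ℝ),
      ∃ ψ : FS.carrier → ↥(FJ.stdSimplex ↥(FJ.cosets F) N), Continuous ψ ∧
        (∀ (g : G) (c : FS.carrier), ψ (FS.smul g c) = FJ.simSMulF F N g (ψ c)) ∧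
        ∀ c c' : FS.carrier, (∃ t ∈ Set.Icc (-α) α, dist (FS.flow t c) c' < δ) →
          dist (ψ c) (ψ c') < ε) :
    -- then the action of `G` on `X` is `N`-`F`-amenable: there is a sequence of
    -- continuous, almost `G`-equivariant maps `X → Δ_F^{(N)}(G)`
    ∃ f : ℕ → X → ↥(FJ.stdSimplex ↥(FJ.cosets F) N),
      (∀ n, Continuous (f n)) ∧
      ∀ g : G, ∀ ε > (0 : ℝ), ∃ n₀ : ℕ, ∀ n ≥ n₀, ∀ x : X,
        dist (f n (g • x)) (FJ.simSMulF F N g (f n x)) < ε := by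
  refine exists_seq_almost_equivariant_of_forall_finset _ fun S ε hε => ?_
  obtain ⟨α, hα, hφ⟩ := hA S
  obtain ⟨δ, hδ, ψ, hψ_cont, hψ_equiv, hψ⟩ := hB α hα ε hε
  obtain ⟨φ, hφ_cont, hφ_close⟩ := hφ δ hδ
  exact ⟨ψ ∘ φ, hψ_cont.comp hφ_cont, fun x g hg =>
    FS.dist_comp_smul_lt _ hφ_close hψ_equiv hψ x hg⟩

/-- Lemma 3.3 of the paper: if there is a flow space `FS` for the countable group `G`
satisfying conditions (A) and (B) with respect to the `G`-space `X`, the family `F` and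
the dimension `N`, then the action of `G` on `X` is `N`-`F`-amenable, i.e. there is a
sequence of continuous, almost `G`-equivariant maps `X → Δ_F^{(N)}(G)`. -/
theorem flowspace_criterion_N_F_amenable
    {G : Type} [Group G] [Countable G]
    -- `F` is a family of subgroups of `G` ...
    (F : Set (Subgroup G)) (hFne : F.Nonempty)
    (hFconj : ∀ H ∈ F, ∀ g : G, (MulAut.conj g) • H ∈ F)
    (hFsub : ∀ H ∈ F, ∀ K : Subgroup G, K ≤ H → K ∈ F)
    -- ... closed under supergroups of finite index
    (hFfinidx : ∀ H ∈ F, ∀ K : Subgroup G, H ≤ K → H.relIndex K ≠ 0 → K ∈ F)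
    (N : ℕ)
    -- `X` is a topological space with an action of `G` by homeomorphisms
    {X : Type} [TopologicalSpace X] [MulAction G X]
    (hXcont : ∀ g : G, Continuous (fun x : X => g • x))
    -- there exists a flow space `FS` for `G` such that:
    (FS : FlowSpace G)
    -- (A): for every finite `S ⊆ G` there is `α > 0` such that for every `δ > 0` there
    -- is a continuous `φ : X → FS` with `d_fol(φ(g•x), g•φ(x)) < (α, δ)` for `x ∈ X`, `g ∈ S`
    (hA : ∀ S : Finset G, ∃ α > (0 : ℝ), ∀ δ > (0 : ℝ),
      ∃ φ : X → FS.carrier, Continuous φ ∧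
        ∀ (x : X), ∀ g ∈ S, ∃ t ∈ Set.Icc (-α) α,
          dist (FS.flow t (φ (g • x))) (FS.smul g (φ x)) < δ)
    -- (B): for every `α, ε > 0` there are `δ > 0` and a continuous `G`-equivariant
    -- `ψ : FS → Δ_F^{(N)}(G)` such that `d_fol(c, c') < (α, δ)` implies `d(ψ c, ψ c') < ε`
    (hB : ∀ α > (0 : ℝ), ∀ ε > (0 : ℝ), ∃ δ > (0 : ℝ),
      ∃ ψ : FS.carrier → ↥(FJ.stdSimplex ↥(FJ.cosets F) N), Continuous ψ ∧
        (∀ (g : G) (c : FS.carrier), ψ (FS.smul g c) = FJ.simSMulF F N g (ψ c)) ∧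
        ∀ c c' : FS.carrier, (∃ t ∈ Set.Icc (-α) α, dist (FS.flow t c) c' < δ) →
          dist (ψ c) (ψ c') < ε) :
    -- then the action of `G` on `X` is `N`-`F`-amenable: there is a sequence of
    -- continuous, almost `G`-equivariant maps `X → Δ_F^{(N)}(G)`
    ∃ f : ℕ → X → ↥(FJ.stdSimplex ↥(FJ.cosets F) N),
      (∀ n, Continuous (f n)) ∧
      ∀ g : G, ∀ ε > (0 : ℝ), ∃ n₀ : ℕ, ∀ n ≥ n₀, ∀ x : X,
        dist (f n (g • x)) (FJ.simSMulF F N g (f n x)) < ε :=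
  flowspace_criterion_N_F_amenable_general F N FS hA hB
end
end

section
/- Let G be a group, g ∈ G an element of infinite order, and N ∈ ℕ. Then for every p ∈ Δ^(N)(G), the ℓ¹ distance between g·p and p satisfies d(g·p, p) ≥ 2/((N+1)² + 1). In particular, the infimum over p ∈ Δ^(N)(G) of d(g·p, p) is strictly positive. -/
open scoped Pointwise ENNReal
open Filter Topology

noncomputable section

/-!
Some point `a` carries mass `p a ≥ 1/(N+1)`. Since `g` has infinite order, the orbit
`a, g⁻¹a, g⁻²a, …` is injective, so `p` tends to zero along it; telescoping `p` along the orbit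
bounds `p a` by a sum of distinct terms `|p(g⁻¹x) - p(x)|` of the `ℓ¹` distance `d(g·p, p)`.
Finally `1/(N+1) ≥ 2/((N+1)² + 1)`.
-/

namespace FJ

open Function

variable {ι : Type}

theorem lp_one_norm_eq_tsum_abs (f : lp (fun _ : ι => ℝ) 1) : ‖f‖ = ∑' i, |f i| := by
  simpa using (lp.hasSum_norm (p := 1) (by norm_num) f).tsum_eq.symm

theorem summable_abs_lp_one (f : lp (fun _ : ι => ℝ) 1) : Summable fun i => |f i| := by
  simpa using (lp.memℓp f).summable (p := 1) (by norm_num)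

theorem abs_apply_le_norm_lpT_sub (e : ι ≃ ι) (q : lp (fun _ : ι => ℝ) 1) {b : ℕ → ι}
    (hb : Injective b) (hstep : ∀ n, b (n + 1) = e (b n)) :
    |q (b 0)| ≤ ‖lpT e q - q‖ := by
  set F : ι → ℝ := fun i => |q (e i) - q i|
  have hF : Summable F := by simpa [F] using summable_abs_lp_one (lpT e q - q)
  have hnorm : ‖lpT e q - q‖ = ∑' i, F i := by simp [lp_one_norm_eq_tsum_abs, F]
  have hpartial : ∀ k, |q (b 0) - q (b k)| ≤ ‖lpT e q - q‖ := fun k => calc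
    |q (b 0) - q (b k)| ≤ ∑ j ∈ Finset.range k, dist (q (b j)) (q (b (j + 1))) :=
        dist_le_range_sum_dist (fun j => q (b j)) k
    _ = ∑ j ∈ Finset.range k, F (b j) := by
        simp only [Real.dist_eq, hstep, F, abs_sub_comm]
    _ ≤ ∑' j, F (b j) := (hF.comp_injective hb).sum_le_tsum _ fun _ _ => abs_nonneg _
    _ ≤ ‖lpT e q - q‖ := hnorm ▸ tsum_comp_le_tsum_of_inj hF (fun _ => abs_nonneg _) hb
  have hvanish : Tendsto (fun k => q (b k)) atTop (𝓝 0) := by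
    have hq : Tendsto q cofinite (𝓝 0) :=
      tendsto_zero_iff_norm_tendsto_zero.2 <| by
        simpa using (summable_abs_lp_one q).tendsto_cofinite_zero
    exact hq.comp (Nat.cofinite_eq_atTop ▸ hb.tendsto_cofinite)
  have hlim : Tendsto (fun k => |q (b 0) - q (b k)|) atTop (𝓝 |q (b 0)|) := by
    simpa using (tendsto_const_nhds.sub hvanish).abs
  exact le_of_tendsto' hlim hpartial

theorem exists_one_div_le_apply_of_mem_stdSimplex {N : ℕ} {p : lp (fun _ : ι => ℝ) 1}
    (hp : p ∈ stdSimplex ι N) : ∃ i, 1 / ((N : ℝ) + 1) ≤ p i := by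
  obtain ⟨-, hfin, hcard, hsum⟩ := hp
  set s := hfin.toFinset
  have hsum_s : ∑ i ∈ s, p i = 1 := by
    rw [← hsum, tsum_eq_sum (s := s)]
    exact fun i hi => not_not.1 fun h => hi (hfin.mem_toFinset.2 h)
  have hs : s.Nonempty := Finset.nonempty_of_sum_ne_zero (by rw [hsum_s]; exact one_ne_zero)
  have hcard_s : (s.card : ℝ) ≤ N + 1 := by
    rw [← Set.ncard_eq_toFinset_card _ hfin]; exact_mod_cast hcard
  have hle : ∑ _i ∈ s, 1 / ((N : ℝ) + 1) ≤ ∑ i ∈ s, p i := by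
    rw [hsum_s, Finset.sum_const, nsmul_eq_mul, mul_one_div, div_le_one (by positivity)]
    exact hcard_s
  obtain ⟨i, -, hi⟩ := Finset.exists_le_of_sum_le hs hle
  exact ⟨i, hi⟩

theorem stdSimplex_nonempty [Nonempty ι] (N : ℕ) : (stdSimplex ι N).Nonempty := by
  classical
  obtain ⟨i⟩ := ‹Nonempty ι›
  have hsupp : {j | (lp.single 1 i 1 : lp (fun _ : ι => ℝ) 1) j ≠ 0} = {i} := by
    ext j; by_cases h : j = i <;> simp [h]
  refine ⟨lp.single 1 i 1, fun j => ?_, ?_, ?_, ?_⟩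
  · by_cases h : j = i <;> simp [h]
  · rw [hsupp]; exact Set.finite_singleton i
  · rw [hsupp, Set.ncard_singleton]; omega
  · rw [tsum_eq_single i fun j hj => by simp [hj]]
    simp

theorem one_div_le_dist_simSMulG {G : Type} [Group G] {g : G} (hg : ¬IsOfFinOrder g) (N : ℕ)
    (p : ↥(stdSimplex G N)) : 1 / ((N : ℝ) + 1) ≤ dist (simSMulG N g p) p := by
  obtain ⟨a, ha⟩ := exists_one_div_le_apply_of_mem_stdSimplex p.2
  have horbit : Injective fun n : ℕ => g⁻¹ ^ n * a :=
    (mul_left_injective a).comp <|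
      injective_pow_iff_not_isOfFinOrder.2 (by rwa [isOfFinOrder_inv_iff])
  have hstep : ∀ n, g⁻¹ ^ (n + 1) * a = Equiv.mulLeft g⁻¹ (g⁻¹ ^ n * a) := fun n => by
    simp [pow_succ', mul_assoc]
  calc 1 / ((N : ℝ) + 1) ≤ p.1 a := ha
    _ ≤ |p.1 (g⁻¹ ^ 0 * a)| := by simpa using le_abs_self (p.1 a)
    _ ≤ dist (simSMulG N g p) p := by
        rw [Subtype.dist_eq, dist_eq_norm]
        exact abs_apply_le_norm_lpT_sub _ p.1 horbit hstep

end FJ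

/-- If `g ∈ G` has infinite order, then for every point `p` of the `N`-skeleton
`Δ^{(N)}(G)` of the full simplex on `G`, the `ℓ¹` distance between `g • p` and `p` is
at least `2 / ((N+1)² + 1)`; in particular the infimum over `p` of these distances
is strictly positive. -/
theorem dist_smul_self_ge_of_infinite_order
    {G : Type} [Group G] (g : G) (hg : ∀ k : ℤ, g ^ k = 1 → k = 0) (N : ℕ) :
    (∀ p : ↥(FJ.stdSimplex G N),
        2 / (((N : ℝ) + 1) ^ 2 + 1) ≤ dist (FJ.simSMulG N g p) p) ∧
      0 < ⨅ p : ↥(FJ.stdSimplex G N), dist (FJ.simSMulG N g p) p := by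
  have hinf : ¬IsOfFinOrder g := fun hfin => by
    obtain ⟨k, hk, hgk⟩ := isOfFinOrder_iff_zpow_eq_one.1 hfin
    exact hk (hg k hgk)
  have hconst : 2 / (((N : ℝ) + 1) ^ 2 + 1) ≤ 1 / ((N : ℝ) + 1) := by
    rw [div_le_div_iff₀ (by positivity) (by positivity)]
    nlinarith [sq_nonneg ((N : ℝ))]
  have hbound (p : ↥(FJ.stdSimplex G N)) :
      2 / (((N : ℝ) + 1) ^ 2 + 1) ≤ dist (FJ.simSMulG N g p) p :=
    hconst.trans (FJ.one_div_le_dist_simSMulG hinf N p)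
  have : Nonempty ↥(FJ.stdSimplex G N) := (FJ.stdSimplex_nonempty N).to_subtype
  have hpos : (0 : ℝ) < 2 / (((N : ℝ) + 1) ^ 2 + 1) := by positivity
  exact ⟨hbound, hpos.trans_le (le_ciInf hbound)⟩
end
end

section
/- Let G be a group containing an element g of infinite order, let N ∈ ℕ, and let X be a G-space containing a point x₀ with g·x₀ = x₀ (for instance, any action of G by homeomorphisms on a Euclidean retract has such a point by Brouwer's fixed point theorem). Then there is no almost G-equivariant sequence of maps f_n : X → Δ^(N)(G); that is, the action of G on X is not N-amenable for any N. -/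
/-! Every power of `g₀` fixes `x₀`, so for `n` large the point `p = f n x₀` is moved by less
than `1/2` by each of `g₀, g₀ ^ 2, …, g₀ ^ M` with `M = (N + 1) ^ 2 + 1` (finitely many
conditions, so one `n` serves them all). The support `S` of `p` has at most `N + 1` points, and
`g₀ ^ j • S` meets `S` only if `g₀ ^ j ∈ S * S⁻¹`, a set of at most `(N + 1) ^ 2` elements.
Since the powers of `g₀` are distinct, some `j ≤ M` makes the supports of `p` and `g₀ ^ j • p`
disjoint, which forces their `ℓ¹` distance to be at least `1`. -/

open scoped Pointwise ENNReal
open Filter Topology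

noncomputable section

namespace FJ

theorem one_le_norm_sub_of_eq_zero_on_support {ι : Type} (p q : lp (fun _ : ι => ℝ) 1)
    (hp : ∀ i, 0 ≤ p i) (hp_sum : ∑' i, p i = 1) (hq : ∀ i, p i ≠ 0 → q i = 0) :
    1 ≤ ‖p - q‖ := by
  have hle : ∀ i, p i ≤ ‖(p - q) i‖ := fun i => by
    by_cases hpi : p i = 0
    · simp [hpi]
    · simp [hq i hpi, abs_of_nonneg (hp i)]
  calc (1 : ℝ) = ∑' i, p i := hp_sum.symm
    _ ≤ ∑' i, ‖(p - q) i‖ :=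
        Summable.tsum_le_tsum hle p.2.summable_of_one (by simpa using (p - q).2.summable)
    _ = ‖p - q‖ := by rw [lp.norm_eq_tsum_rpow (by norm_num)]; simp

theorem exists_pow_mem_Icc_notMem {G : Type} [Monoid G] {g : G}
    (hg : Function.Injective fun j : ℕ => g ^ j) (D : Finset G) :
    ∃ j ∈ Finset.Icc 1 (D.card + 1), g ^ j ∉ D := by
  classical
  have hcard : D.card < ((Finset.Icc 1 (D.card + 1)).image fun j => g ^ j).card := by
    rw [Finset.card_image_of_injective _ hg, Nat.card_Icc]
    omega
  obtain ⟨_, hx, hxD⟩ := Finset.exists_mem_notMem_of_card_lt_card hcard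
  obtain ⟨j, hj, rfl⟩ := Finset.mem_image.1 hx
  exact ⟨j, hj, hxD⟩

theorem exists_pow_translate_disjoint {G : Type} [Group G] {g : G}
    (hg : Function.Injective fun j : ℕ => g ^ j) {N : ℕ} (S : Finset G) (hS : S.card ≤ N + 1) :
    ∃ j ∈ Finset.Icc 1 ((N + 1) ^ 2 + 1), ∀ s ∈ S, (g ^ j)⁻¹ * s ∉ S := by
  classical
  obtain ⟨j, hj, hjD⟩ := exists_pow_mem_Icc_notMem hg (S * S⁻¹)
  have hD : (S * S⁻¹).card ≤ (N + 1) ^ 2 := calc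
    (S * S⁻¹).card ≤ S.card * S⁻¹.card := Finset.card_mul_le
    _ ≤ (N + 1) * (N + 1) := by rw [Finset.card_inv]; exact Nat.mul_le_mul hS hS
    _ = (N + 1) ^ 2 := (sq _).symm
  refine ⟨j, Finset.Icc_subset_Icc_right (by omega) hj, fun s hs ht => hjD ?_⟩
  simpa using Finset.mul_mem_mul hs (Finset.inv_mem_inv ht)

theorem exists_pow_one_le_dist_simSMulG {G : Type} [Group G] {g : G}
    (hg : Function.Injective fun j : ℕ => g ^ j) {N : ℕ} (p : ↥(stdSimplex G N)) :
    ∃ j ∈ Finset.Icc 1 ((N + 1) ^ 2 + 1), 1 ≤ dist p (simSMulG N (g ^ j) p) := by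
  obtain ⟨hp, hfin, hcard, hp_sum⟩ := p.2
  obtain ⟨j, hj, hdisj⟩ := exists_pow_translate_disjoint hg hfin.toFinset
    (by rwa [Set.ncard_eq_toFinset_card _ hfin] at hcard)
  refine ⟨j, hj, ?_⟩
  rw [Subtype.dist_eq, dist_eq_norm]
  refine one_le_norm_sub_of_eq_zero_on_support _ _ hp hp_sum fun h hh => ?_
  show (p : G → ℝ) ((g ^ j)⁻¹ * h) = 0
  by_contra hne
  exact hdisj h (hfin.mem_toFinset.2 hh) (hfin.mem_toFinset.2 hne)

end FJ

/-- If `G` contains an element `g₀` of infinite order and `X` is a `G`-space containing a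
point `x₀` fixed by `g₀` (for instance, by Brouwer's fixed point theorem, any `G`-action by
homeomorphisms on a Euclidean retract has such a point), then there is no almost
`G`-equivariant sequence of maps `X → Δ^{(N)}(G)`: the action of `G` on `X` is not
`N`-amenable for any `N`. -/
theorem not_N_amenable_of_fixed_point
    {G : Type} [Group G] (g₀ : G) (hg : ∀ k : ℤ, g₀ ^ k = 1 → k = 0) (N : ℕ)
    {X : Type} [MulAction G X] (x₀ : X) (hx₀ : g₀ • x₀ = x₀) :
    ¬ ∃ f : ℕ → X → ↥(FJ.stdSimplex G N),
        ∀ g : G, ∀ ε > (0 : ℝ), ∃ n₀ : ℕ, ∀ n ≥ n₀, ∀ x : X,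
          dist (f n (g • x)) (FJ.simSMulG N g (f n x)) < ε := by
  rintro ⟨f, hf⟩
  have hinj : Function.Injective fun j : ℕ => g₀ ^ j :=
    injective_pow_iff_not_isOfFinOrder.2 fun hfin =>
      let ⟨k, hk, hk1⟩ := isOfFinOrder_iff_zpow_eq_one.1 hfin
      hk (hg k hk1)
  choose n₀ hn₀ using fun j : ℕ => hf (g₀ ^ j) (1 / 2) one_half_pos
  set n := (Finset.Icc 1 ((N + 1) ^ 2 + 1)).sup n₀
  obtain ⟨j, hj, hfar⟩ := FJ.exists_pow_one_le_dist_simSMulG hinj (f n x₀)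
  have hfix : g₀ ^ j • x₀ = x₀ :=
    MulAction.mem_stabilizer_iff.1 (Subgroup.pow_mem _ (MulAction.mem_stabilizer_iff.2 hx₀) j)
  have hnear := hn₀ j n (Finset.le_sup hj) x₀
  rw [hfix] at hnear
  linarith
end
end

section
/- Let FS be a flow space for a group G whose G-action is cocompact (there is a compact subset K ⊆ FS with G·K = FS), let E be a metric space with an isometric G-action, and let ψ : FS → E be a continuous G-equivariant map. Let α, ε > 0 and assume that d(ψ(Φ_t(c)), ψ(c)) < ε for all c ∈ FS and all t ∈ [−α, α]. Then there exists δ > 0 such that for all c, c' ∈ FS, d_fol(c,c') < (α,δ) implies d(ψ(c), ψ(c')) < 2ε. -/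
/-- Uniform continuity near a compact set: if `f` is continuous and `L` is compact,
then there is `δ > 0` so that any point within `δ` of a point of `L` has image
within `ε` of that point's image. -/
lemma exists_delta_near_compact {X E : Type} [MetricSpace X] [MetricSpace E]
    {L : Set X} (hL : IsCompact L) {f : X → E} (hf : Continuous f)
    {ε : ℝ} (hε : 0 < ε) :
    ∃ δ > (0 : ℝ), ∀ y ∈ L, ∀ x : X, dist x y < δ → dist (f x) (f y) < ε := by
  -- for each y, choose r y > 0 with f '' (ball y (2 r y)) ⊆ ball (f y) (ε/2)
  have key : ∀ y : X, ∃ r > (0 : ℝ), ∀ x, dist x y < 2 * r → dist (f x) (f y) < ε / 2 := by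
    intro y
    have := Metric.continuous_iff.mp hf y (ε / 2) (by linarith)
    obtain ⟨d, hd, h⟩ := this
    exact ⟨d / 2, by linarith, fun x hx => h x (by linarith)⟩
  choose r hr hball using key
  have hcover : L ⊆ ⋃ y ∈ L, Metric.ball y (r y) := by
    intro y hy
    exact Set.mem_biUnion hy (Metric.mem_ball_self (hr y))
  obtain ⟨s, hsL, hs⟩ := hL.elim_finite_subcover_image
    (fun y _ => Metric.isOpen_ball) hcover
  by_cases hse : s.Nonempty
  · obtain ⟨δ, hδpos, hδle⟩ : ∃ δ > (0 : ℝ), ∀ y ∈ s, δ ≤ r y := by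
      obtain ⟨m, hm, hmin⟩ := Set.exists_min_image s r hs.1 hse
      exact ⟨r m, hr m, fun y hy => hmin y hy⟩
    refine ⟨δ, hδpos, fun y hy x hxy => ?_⟩
    obtain ⟨z, hz, hyz⟩ := Set.mem_iUnion₂.mp (hs.2 hy)
    have hyz' : dist y z < r z := Metric.mem_ball.mp hyz
    have hxz : dist x z < 2 * r z := by
      have := dist_triangle x y z
      have hδr := hδle z hz
      linarith
    have h1 := hball z x hxz
    have h2 := hball z y (by have := hr z; linarith)
    have := dist_triangle (f x) (f z) (f y)
    rw [dist_comm (f z) (f y)] at this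
    linarith
  · refine ⟨1, one_pos, fun y hy x _ => absurd (hs.2 hy) ?_⟩
    simp [Set.not_nonempty_iff_eq_empty.mp hse]

/-- For a cocompact flow space `FS` and a continuous `G`-equivariant map `ψ : FS → E`
into an isometric `G`-metric space, if `d(ψ(Φ_t c), ψ c) < ε` for all `c` and all
`t ∈ [−α, α]`, then there is a uniform `δ > 0` such that `d_fol(c, c') < (α, δ)`
implies `d(ψ c, ψ c') < 2ε`. -/
theorem exists_uniform_delta_of_cocompact_flowspace
    {G : Type} [Group G] (FS : FlowSpace G)
    (K : Set FS.carrier) (hK : IsCompact K)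
    (hcocompact : ∀ c : FS.carrier, ∃ g : G, ∃ k ∈ K, c = FS.smul g k)
    {E : Type} [MetricSpace E] [MulAction G E]
    (hE : ∀ g : G, Isometry (fun e : E => g • e))
    (ψ : FS.carrier → E) (hψcont : Continuous ψ)
    (hψequiv : ∀ (g : G) (c : FS.carrier), ψ (FS.smul g c) = g • ψ c)
    (α ε : ℝ) (hα : 0 < α) (hε : 0 < ε)
    (hflow : ∀ c : FS.carrier, ∀ t ∈ Set.Icc (-α) α, dist (ψ (FS.flow t c)) (ψ c) < ε) :
    ∃ δ > (0 : ℝ), ∀ c c' : FS.carrier,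
      (∃ t ∈ Set.Icc (-α) α, dist (FS.flow t c) c' < δ) →
        dist (ψ c) (ψ c') < 2 * ε := by
  -- the compact set L = Φ([-α,α] × K)
  set L : Set FS.carrier :=
    (fun p : ℝ × FS.carrier => FS.flow p.1 p.2) '' (Set.Icc (-α) α ×ˢ K) with hLdef
  have hLcomp : IsCompact L :=
    (isCompact_Icc.prod hK).image FS.flow_continuous
  obtain ⟨δ, hδpos, hδ⟩ := exists_delta_near_compact hLcomp hψcont hε
  refine ⟨δ, hδpos, fun c c' ⟨t, ht, hd⟩ => ?_⟩
  obtain ⟨g, k, hk, rfl⟩ := hcocompact c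
  -- Φ_t (g k) = g (Φ_t k)
  have hflip : FS.flow t (FS.smul g k) = FS.smul g (FS.flow t k) :=
    (FS.smul_flow g t k).symm
  -- translate back by g⁻¹
  have hginv : ∀ x, FS.smul g⁻¹ (FS.smul g x) = x := by
    intro x; rw [← FS.mul_smul, inv_mul_cancel, FS.one_smul]
  have hdist : dist (FS.flow t k) (FS.smul g⁻¹ c') < δ := by
    have := (FS.smul_isometry g⁻¹).dist_eq (FS.flow t (FS.smul g k)) c'
    rw [hflip, hginv] at this
    rw [this, ← hflip]; exact hd
  have hmem : FS.flow t k ∈ L :=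
    ⟨(t, k), Set.mk_mem_prod ht hk, rfl⟩
  have h1 : dist (ψ (FS.smul g⁻¹ c')) (ψ (FS.flow t k)) < ε := by
    exact hδ _ hmem _ (by rw [dist_comm]; exact hdist)
  have h2 : dist (ψ (FS.flow t k)) (ψ k) < ε := hflow k t ht
  -- assemble, using equivariance / isometry of the E-action
  have hiso : ∀ (g : G) (e e' : E), dist (g • e) (g • e') = dist e e' :=
    fun g e e' => (hE g).dist_eq e e'
  have key : dist (ψ (FS.smul g k)) (ψ c') = dist (ψ k) (ψ (FS.smul g⁻¹ c')) := by
    have : ψ c' = g • ψ (FS.smul g⁻¹ c') := by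
      rw [← hψequiv, ← FS.mul_smul, mul_inv_cancel, FS.one_smul]
    rw [this, hψequiv, hiso]
  rw [key]
  have := dist_triangle (ψ k) (ψ (FS.flow t k)) (ψ (FS.smul g⁻¹ c'))
  rw [dist_comm (ψ k) (ψ (FS.flow t k))] at this
  rw [dist_comm (ψ (FS.flow t k)) (ψ (FS.smul g⁻¹ c'))] at this
  linarith
end
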